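/- arXiv:cs/0002012 — 4 statements merged into one kernel-verified Lean document; each statement's English description precedes it below -/
import Mathlib

section
/- Let s, s_i, s_j be strings of length m with d(s_i, s) ≤ D and d(s_j, s) ≤ D, where d(s_i, s_j) = ρ₀·D for some ρ₀ ≥ 0 and D > 0. Then there is some i' ∈ {i, j} such that the number of positions where s_i and s_j disagree and s_{i'} disagrees with s is at least ρ₀·D/2; consequently, letting Q = {k : s_i[k] = s_j[k]}, the number of positions in Q where s_{i'} differs from s is at most (1 − ρ₀/2)·D. -/
/-- Among s_i, s_j at distance ρ₀·D, one of the two (call it a, the other b) has at least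
ρ₀·D/2 mismatches with s among the positions where a and b disagree; consequently a has at
most (1 − ρ₀/2)·D mismatches with s on the positions Q where s_i and s_j agree. -/
theorem half_mismatch_choice {m : ℕ} {σ : Type*} [DecidableEq σ]
    (si sj s : Fin m → σ) (D ρ₀ : ℝ) (hD : 0 < D) (hρ₀ : 0 ≤ ρ₀)
    (hi : (hammingDist si s : ℝ) ≤ D) (hj : (hammingDist sj s : ℝ) ≤ D)
    (hij : (hammingDist si sj : ℝ) = ρ₀ * D) :
    ∃ a b : Fin m → σ, ((a, b) = (si, sj) ∨ (a, b) = (sj, si)) ∧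
      ρ₀ * D / 2 ≤ ((Finset.univ.filter (fun j : Fin m => a j ≠ b j ∧ a j ≠ s j)).card : ℝ) ∧
      ((Finset.univ.filter (fun j : Fin m => si j = sj j ∧ a j ≠ s j)).card : ℝ)
        ≤ (1 - ρ₀ / 2) * D := by
  classical
  set A := Finset.univ.filter (fun j : Fin m => si j ≠ sj j ∧ si j ≠ s j) with hA
  set B := Finset.univ.filter (fun j : Fin m => sj j ≠ si j ∧ sj j ≠ s j) with hB
  have hsub : Finset.univ.filter (fun j : Fin m => si j ≠ sj j) ⊆ A ∪ B := by
    intro j hjmem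
    simp only [Finset.mem_filter, Finset.mem_univ, true_and] at hjmem
    simp only [hA, hB, Finset.mem_union, Finset.mem_filter, Finset.mem_univ, true_and]
    by_cases h : si j = s j
    · exact Or.inr ⟨fun h' => hjmem h'.symm, fun h' => hjmem (h.trans h'.symm)⟩
    · exact Or.inl ⟨hjmem, h⟩
  have hdist : hammingDist si sj = (Finset.univ.filter (fun j : Fin m => si j ≠ sj j)).card := rfl
  have hsum : (hammingDist si sj : ℝ) ≤ (A.card : ℝ) + (B.card : ℝ) := by
    have := (Finset.card_le_card hsub).trans (Finset.card_union_le A B)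
    rw [hdist]
    exact_mod_cast this
  have part2 : ∀ (a b : Fin m → σ), (∀ j, (si j = sj j) ↔ (a j = b j)) →
      (Finset.univ.filter (fun j : Fin m => si j = sj j ∧ a j ≠ s j)).card
        + (Finset.univ.filter (fun j : Fin m => a j ≠ b j ∧ a j ≠ s j)).card
        ≤ hammingDist a s := by
    intro a b hiff
    rw [show hammingDist a s = (Finset.univ.filter (fun j : Fin m => a j ≠ s j)).card from rfl]
    rw [← Finset.card_union_of_disjoint]
    · apply Finset.card_le_card
      intro j hjmem
      simp only [Finset.mem_union, Finset.mem_filter, Finset.mem_univ, true_and] at hjmem ⊢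
      rcases hjmem with h | h
      · exact h.2
      · exact h.2
    · rw [Finset.disjoint_filter]
      intro j _ h h'
      exact h'.1 ((hiff j).mp h.1)
  rcases le_or_gt (ρ₀ * D / 2) (A.card : ℝ) with hcase | hcase
  · refine ⟨si, sj, Or.inl rfl, hcase, ?_⟩
    have h2 := part2 si sj (fun j => Iff.rfl)
    have h2' : ((Finset.univ.filter (fun j : Fin m => si j = sj j ∧ si j ≠ s j)).card : ℝ)
        + (A.card : ℝ) ≤ (hammingDist si s : ℝ) := by exact_mod_cast h2
    have := h2'.trans hi
    nlinarith
  · have hBcard : ρ₀ * D / 2 ≤ (B.card : ℝ) := by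
      rw [hij] at hsum; linarith
    refine ⟨sj, si, Or.inr rfl, hBcard, ?_⟩
    have h2 := part2 sj si (fun j => ⟨fun h => h.symm, fun h => h.symm⟩)
    have h2' : ((Finset.univ.filter (fun j : Fin m => si j = sj j ∧ sj j ≠ s j)).card : ℝ)
        + (B.card : ℝ) ≤ (hammingDist sj s : ℝ) := by exact_mod_cast h2
    have := h2'.trans hj
    nlinarith
end

section
/- For every real ε with 0 < ε ≤ 1, we have e/(1+ε)^(1+1/ε) ≤ exp(−ε/3); equivalently, 1 − (1 + 1/ε)·ln(1+ε) ≤ −ε/3. -/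
/-!
Since `log (1 + x) ≥ 2x / (x + 2)`, one gets `(1 + x) log (1 + x) ≥ x + x² / 3` on `[0, 1]`,
the slack being `x² (1 - x) / (3 (x + 2))`. Dividing by `ε` gives the logarithmic form, and
exponentiating gives the other one, as `(1 + ε) ^ (1 + 1/ε) = exp ((1 + 1/ε) log (1 + ε))`.
-/

open Real

lemma add_sq_div_three_le_mul_log_one_add {x : ℝ} (hx0 : 0 ≤ x) (hx1 : x ≤ 1) :
    x + x ^ 2 / 3 ≤ (1 + x) * log (1 + x) := by
  have hpade : 2 * x / (x + 2) ≤ log (1 + x) := le_log_one_add_of_nonneg hx0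
  calc x + x ^ 2 / 3 ≤ (1 + x) * (2 * x / (x + 2)) := by
        rw [mul_div_assoc', le_div_iff₀ (by linarith)]
        nlinarith [mul_nonneg (sq_nonneg x) (sub_nonneg.2 hx1)]
    _ ≤ (1 + x) * log (1 + x) := by gcongr

lemma one_sub_one_add_inv_mul_log_le {ε : ℝ} (hε0 : 0 < ε) (hε1 : ε ≤ 1) :
    1 - (1 + 1 / ε) * log (1 + ε) ≤ -ε / 3 := by
  have hkey := add_sq_div_three_le_mul_log_one_add hε0.le hε1
  have hrw : (1 + 1 / ε) * log (1 + ε) = (1 + ε) * log (1 + ε) / ε := by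
    field_simp; ring
  rw [hrw, sub_le_iff_le_add, ← sub_le_iff_le_add', le_div_iff₀ hε0]
  nlinarith

/-- For 0 < ε ≤ 1, e/(1+ε)^(1+1/ε) ≤ exp(−ε/3), equivalently
1 − (1 + 1/ε)·ln(1+ε) ≤ −ε/3. -/
theorem exp_ratio_bound (ε : ℝ) (hε0 : 0 < ε) (hε1 : ε ≤ 1) :
    Real.exp 1 / (1 + ε) ^ ((1 : ℝ) + 1 / ε) ≤ Real.exp (-ε / 3) ∧
    1 - (1 + 1 / ε) * Real.log (1 + ε) ≤ -ε / 3 := by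
  have hlog := one_sub_one_add_inv_mul_log_le hε0 hε1
  refine ⟨?_, hlog⟩
  rw [rpow_def_of_pos (by linarith), ← exp_sub, mul_comm]
  exact exp_le_exp.mpr hlog
end

section
/- The function x ↦ (1+x)^(1+1/x) is monotone increasing for x > 0. -/
/-!
Writing `φ t = t * log t`, one has `(1 + x) ^ (1 + 1 / x) = exp ((φ (1 + x) - φ 1) / x)`, the
exponential of the slope of the secant of `φ` through `1` and `1 + x`. Since `φ` is convex, this
slope increases with `x`.
-/

open Real Set

lemma one_add_rpow_one_add_inv_eq_exp_slope {x : ℝ} (hx : 0 < x) :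
    (1 + x) ^ ((1 : ℝ) + 1 / x) = exp (slope (fun t => t * log t) 1 (1 + x)) := by
  rw [rpow_def_of_pos (by linarith), slope_def_field]
  simp only [log_one, mul_zero, sub_zero, add_sub_cancel_left]
  congr 1
  field_simp
  ring

lemma monotoneOn_slope_mul_log_one : MonotoneOn (slope (fun t : ℝ => t * log t) 1) (Ioi 1) :=
  (convexOn_mul_log.monotoneOn_slope_gt (by norm_num)).mono
    fun _ hy => ⟨(zero_le_one.trans (le_of_lt hy) : (0 : ℝ) ≤ _), hy⟩

/-- The function x ↦ (1+x)^(1+1/x) is monotone increasing for x > 0. -/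
theorem monotone_one_add_rpow :
    MonotoneOn (fun x : ℝ => (1 + x) ^ ((1 : ℝ) + 1 / x)) (Set.Ioi (0 : ℝ)) := by
  intro x hx y hy hxy
  simp only [one_add_rpow_one_add_inv_eq_exp_slope hx, one_add_rpow_one_add_inv_eq_exp_slope hy]
  have h1x : 1 + x ∈ Ioi (1 : ℝ) := by simpa using hx
  have h1y : 1 + y ∈ Ioi (1 : ℝ) := by simpa using hy
  exact exp_le_exp.2 <| monotoneOn_slope_mul_log_one h1x h1y (by linarith)
end

section
/- Let S = {s₁,...,s_n} be strings of length m, s an optimal closest string with radius D = max_i d(s_i, s) > 0, and r ≥ 2 an integer. If max_{i,j} d(s_i,s_j) > (1 + 1/(2r−1))·D, then there exist indices i₁,...,i_r ∈ {1,...,n} such that, letting Q be the set of positions where s_{i₁},...,s_{i_r} all agree, for every l ∈ {1,...,n}: d(s_l|_Q, s_{i₁}|_Q) − d(s_l|_Q, s|_Q) ≤ D/(2r−1). -/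
private noncomputable def cnt {m : ℕ} (p : Fin m → Prop) : ℕ := Nat.card {j : Fin m // p j}

private lemma cnt_eq {m : ℕ} {p q : Fin m → Prop} [DecidablePred p] (h : ∀ j, p j ↔ q j) :
    (Finset.univ.filter p).card = cnt q := by
  have h1 : (Finset.univ.filter p).card = Nat.card {j : Fin m // p j} := by
    rw [Nat.card_eq_fintype_card, Fintype.card_subtype]
  rw [h1]
  exact Nat.card_congr (Equiv.subtypeEquivRight h)

private lemma cnt_congr {m : ℕ} {p q : Fin m → Prop} (h : ∀ j, p j ↔ q j) : cnt p = cnt q :=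
  Nat.card_congr (Equiv.subtypeEquivRight h)

private lemma cnt_mono {m : ℕ} {p q : Fin m → Prop} (h : ∀ j, p j → q j) : cnt p ≤ cnt q :=
  Nat.card_le_card_of_injective (fun x => (⟨x.1, h _ x.2⟩ : {j // q j}))
    (fun a b hab => Subtype.ext (by simpa using hab))

private lemma cnt_split {m : ℕ} (p q : Fin m → Prop) :
    cnt p = cnt (fun j => p j ∧ q j) + cnt (fun j => p j ∧ ¬ q j) := by
  classical
  unfold cnt
  rw [← Nat.card_sum]
  apply Nat.card_congr
  exact (Equiv.sumCompl (fun x : {j // p j} => q x.1)).symm.trans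
    (Equiv.sumCongr (Equiv.subtypeSubtypeEquivSubtypeInter p q)
      (Equiv.subtypeSubtypeEquivSubtypeInter p (fun j => ¬ q j)))

private lemma two_mul_le_two_pow (r : ℕ) : 2 * r ≤ 2 ^ r := by
  induction r with
  | zero => norm_num
  | succ k ih =>
    rcases Nat.eq_zero_or_pos k with h | h
    · subst h; norm_num
    · have h2 : 2 ≤ 2 ^ k := by
        have := Nat.one_lt_two_pow_iff.2 (by omega : k ≠ 0)
        omega
      calc 2 * (k + 1) = 2 * k + 2 := by ring
        _ ≤ 2 ^ k + 2 ^ k := by omega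
        _ = 2 ^ (k + 1) := by rw [pow_succ]; ring

section CSKaux

variable {m n r : ℕ} {σ : Type*} [DecidableEq σ]

private def Pp (s : Fin n → Fin m → σ) (idx : Fin r → Fin n) (j : Fin m) : Prop :=
  ∀ a b : Fin r, s (idx a) j = s (idx b) j

private lemma Pp_iff (s : Fin n → Fin m → σ) (idx : Fin r → Fin n) (h0 : 0 < r) (j : Fin m) :
    Pp s idx j ↔ ∀ a : Fin r, s (idx a) j = s (idx ⟨0, h0⟩) j :=
  ⟨fun h a => h a _, fun h a b => (h a).trans (h b).symm⟩

private lemma arith1 (a b2 p u D : ℕ) (h1 : D + b2 < a) (h2 : a + b2 ≤ p)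
    (h3 : p ≤ 2 * u - D) (h4 : D ≤ u) : b2 ≤ u - D := by omega

private lemma arith2 (x y a bb pc : ℕ) (hs : pc = x + y) (ha : a ≤ x) (hb : bb ≤ y) :
    a + bb ≤ pc := by omega

private lemma auxrec (s : Fin n → Fin m → σ) (c : Fin m → σ) (D : ℕ) (hr1 : 0 < r) :
    ∀ b : ℕ, ∀ idx : Fin r → Fin n,
      (∀ a : Fin r, r - b ≤ (a : ℕ) → idx a = idx ⟨0, hr1⟩) →
      b + 1 ≤ r →
      (2 * r - 1) * cnt (fun j => Pp s idx j ∧ s (idx ⟨0, hr1⟩) j ≠ c j) ≤ (2 ^ (b+1) - 1) * D →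
      ∃ idx' : Fin r → Fin n, ∀ l : Fin n,
        (2 * r - 1) * cnt (fun j => Pp s idx' j ∧ s l j = c j ∧ s l j ≠ s (idx' ⟨0, hr1⟩) j)
          ≤ D + (2 * r - 1) *
            cnt (fun j => Pp s idx' j ∧ s l j = s (idx' ⟨0, hr1⟩) j ∧ s (idx' ⟨0, hr1⟩) j ≠ c j) := by
  intro b
  induction b with
  | zero =>
    intro idx hpad hble hinv
    refine ⟨idx, fun l => ?_⟩
    by_contra hcon
    push_neg at hcon
    have hA : cnt (fun j => Pp s idx j ∧ s l j = c j ∧ s l j ≠ s (idx ⟨0, hr1⟩) j)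
        ≤ cnt (fun j => Pp s idx j ∧ s (idx ⟨0, hr1⟩) j ≠ c j) :=
      cnt_mono (fun j hj => ⟨hj.1, fun he => hj.2.2 (hj.2.1.trans he.symm)⟩)
    have hmul : (2 * r - 1) * cnt (fun j => Pp s idx j ∧ s l j = c j ∧ s l j ≠ s (idx ⟨0, hr1⟩) j)
        ≤ (2 * r - 1) * cnt (fun j => Pp s idx j ∧ s (idx ⟨0, hr1⟩) j ≠ c j) :=
      Nat.mul_le_mul_left _ hA
    norm_num at hinv
    have h2 : D + (2 * r - 1) *
        cnt (fun j => Pp s idx j ∧ s l j = s (idx ⟨0, hr1⟩) j ∧ s (idx ⟨0, hr1⟩) j ≠ c j) < D :=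
      lt_of_lt_of_le hcon (le_trans hmul hinv)
    exact (Nat.le_add_right D _).not_gt h2
  | succ b ih =>
    intro idx hpad hble hinv
    by_cases hvi : ∀ l : Fin n,
        (2 * r - 1) * cnt (fun j => Pp s idx j ∧ s l j = c j ∧ s l j ≠ s (idx ⟨0, hr1⟩) j)
          ≤ D + (2 * r - 1) *
            cnt (fun j => Pp s idx j ∧ s l j = s (idx ⟨0, hr1⟩) j ∧ s (idx ⟨0, hr1⟩) j ≠ c j)
    · exact ⟨idx, hvi⟩
    push_neg at hvi
    obtain ⟨l, hl⟩ := hvi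
    obtain ⟨k, hkeq⟩ : ∃ k, k = r - (b + 1) := ⟨_, rfl⟩
    have hkr : k < r := by omega
    have hk1 : 1 ≤ k := by omega
    set idx' : Fin r → Fin n := Function.update idx ⟨k, hkr⟩ l with hidx'
    have hne0 : (⟨0, hr1⟩ : Fin r) ≠ ⟨k, hkr⟩ := Fin.ne_of_val_ne (show (0 : ℕ) ≠ k by omega)
    have h0 : idx' ⟨0, hr1⟩ = idx ⟨0, hr1⟩ := Function.update_of_ne hne0 l idx
    have hkpad : idx ⟨k, hkr⟩ = idx ⟨0, hr1⟩ := hpad ⟨k, hkr⟩ (show r - (b + 1) ≤ k by omega)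
    have hPp : ∀ j, Pp s idx' j ↔ (Pp s idx j ∧ s l j = s (idx ⟨0, hr1⟩) j) := by
      intro j
      constructor
      · intro h
        have hfa : ∀ a : Fin r, s (idx' a) j = s (idx' ⟨0, hr1⟩) j := fun a => h a _
        have hstar : ∀ a : Fin r, s (idx a) j = s (idx ⟨0, hr1⟩) j := by
          intro a
          by_cases ha : a = ⟨k, hkr⟩
          · rw [ha, hkpad]
          · have := hfa a
            rwa [h0, hidx', Function.update_of_ne ha] at this
        refine ⟨(Pp_iff s idx hr1 j).mpr hstar, ?_⟩
        have := hfa ⟨k, hkr⟩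
        rwa [h0, hidx', Function.update_self] at this
      · rintro ⟨hP, hlj⟩
        have hstar : ∀ a : Fin r, s (idx' a) j = s (idx ⟨0, hr1⟩) j := by
          intro a
          by_cases ha : a = ⟨k, hkr⟩
          · rw [ha, hidx', Function.update_self]; exact hlj
          · rw [hidx', Function.update_of_ne ha]; exact hP a ⟨0, hr1⟩
        exact fun a b2 => (hstar a).trans (hstar b2).symm
    have hpc : cnt (fun j => Pp s idx' j ∧ s (idx' ⟨0, hr1⟩) j ≠ c j)
        = cnt (fun j => Pp s idx j ∧ s l j = s (idx ⟨0, hr1⟩) j ∧ s (idx ⟨0, hr1⟩) j ≠ c j) := by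
      apply cnt_congr
      intro j
      rw [hPp j, h0]
      tauto
    have hsplit := cnt_split (fun j => Pp s idx j ∧ s (idx ⟨0, hr1⟩) j ≠ c j)
      (fun j => s l j = c j)
    have hA' : cnt (fun j => Pp s idx j ∧ s l j = c j ∧ s l j ≠ s (idx ⟨0, hr1⟩) j)
        ≤ cnt (fun j => (Pp s idx j ∧ s (idx ⟨0, hr1⟩) j ≠ c j) ∧ s l j = c j) :=
      cnt_mono (fun j hj => ⟨⟨hj.1, fun he => hj.2.2 (hj.2.1.trans he.symm)⟩, hj.2.1⟩)
    have hB' : cnt (fun j => Pp s idx j ∧ s l j = s (idx ⟨0, hr1⟩) j ∧ s (idx ⟨0, hr1⟩) j ≠ c j)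
        ≤ cnt (fun j => (Pp s idx j ∧ s (idx ⟨0, hr1⟩) j ≠ c j) ∧ ¬ s l j = c j) :=
      cnt_mono (fun j hj => ⟨⟨hj.1, hj.2.2⟩, fun he => hj.2.2 (hj.2.1.symm.trans he)⟩)
    have hABp : cnt (fun j => Pp s idx j ∧ s l j = c j ∧ s l j ≠ s (idx ⟨0, hr1⟩) j)
        + cnt (fun j => Pp s idx j ∧ s l j = s (idx ⟨0, hr1⟩) j ∧ s (idx ⟨0, hr1⟩) j ≠ c j)
        ≤ cnt (fun j => Pp s idx j ∧ s (idx ⟨0, hr1⟩) j ≠ c j) :=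
      arith2 _ _ _ _ _ hsplit hA' hB'
    have hKABB : (2 * r - 1) * cnt (fun j => Pp s idx j ∧ s l j = c j ∧ s l j ≠ s (idx ⟨0, hr1⟩) j)
        + (2 * r - 1) * cnt (fun j => Pp s idx j ∧ s l j = s (idx ⟨0, hr1⟩) j ∧ s (idx ⟨0, hr1⟩) j ≠ c j)
        ≤ (2 * r - 1) * cnt (fun j => Pp s idx j ∧ s (idx ⟨0, hr1⟩) j ≠ c j) := by
      rw [← Nat.mul_add]
      exact Nat.mul_le_mul_left _ hABp
    have hpow : (2 : ℕ) ^ (b + 1 + 1) = 2 * 2 ^ (b + 1) := by ring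
    have hone : 1 ≤ (2 : ℕ) ^ (b + 1) := Nat.one_le_two_pow
    have e1 : (2 * 2 ^ (b + 1) - 1) * D = 2 * (2 ^ (b + 1) * D) - D := by
      rw [Nat.sub_mul, one_mul, mul_assoc]
    have e2 : ((2 : ℕ) ^ (b + 1) - 1) * D = 2 ^ (b + 1) * D - D := by
      rw [Nat.sub_mul, one_mul]
    have e3 : D ≤ 2 ^ (b + 1) * D := Nat.le_mul_of_pos_left D (by positivity)
    rw [hpow, e1] at hinv
    refine ih idx' ?_ (by omega) ?_
    · intro a hav
      have hane : a ≠ ⟨k, hkr⟩ := Fin.ne_of_val_ne (show (a : ℕ) ≠ k by omega)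
      rw [h0, hidx', Function.update_of_ne hane]
      exact hpad a (by omega)
    · rw [hpc, e2]
      exact arith1 _ _ _ _ _ hl hKABB hinv e3

end CSKaux

/-- Key lemma for the Closest String PTAS: if some pair of input strings is farther apart
than (1 + 1/(2r−1))·D, then there are r indices i₁,...,i_r such that, on the positions Q
where s_{i₁},...,s_{i_r} all agree, every s_l satisfies
d(s_l|_Q, s_{i₁}|_Q) − d(s_l|_Q, s|_Q) ≤ D/(2r−1). -/
theorem closest_string_key_lemma {m n r D : ℕ} {σ : Type*} [DecidableEq σ]
    (s : Fin n → Fin m → σ) (c : Fin m → σ)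
    (hr : 2 ≤ r) (hD : 0 < D)
    (hopt : ∀ i, hammingDist (s i) c ≤ D)
    (hfar : ∃ i j, (1 + 1 / (2 * (r : ℝ) - 1)) * D < (hammingDist (s i) (s j) : ℝ)) :
    ∃ idx : Fin r → Fin n, ∀ l : Fin n,
      ((Finset.univ.filter (fun j : Fin m =>
          (∀ a b : Fin r, s (idx a) j = s (idx b) j) ∧
            s l j ≠ s (idx ⟨0, by omega⟩) j)).card : ℝ)
      - ((Finset.univ.filter (fun j : Fin m =>
          (∀ a b : Fin r, s (idx a) j = s (idx b) j) ∧ s l j ≠ c j)).card : ℝ)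
      ≤ (D : ℝ) / (2 * (r : ℝ) - 1) := by
  have hr1 : 0 < r := by omega
  obtain ⟨i₀, -, -⟩ := hfar
  -- initial invariant for the constant family
  have hinit : (2 * r - 1) * cnt (fun j => Pp s (fun _ : Fin r => i₀) j
      ∧ s ((fun _ : Fin r => i₀) (⟨0, hr1⟩ : Fin r)) j ≠ c j) ≤ (2 ^ ((r-1)+1) - 1) * D := by
    have h1 : cnt (fun j => Pp s (fun _ : Fin r => i₀) j
        ∧ s ((fun _ : Fin r => i₀) (⟨0, hr1⟩ : Fin r)) j ≠ c j)
        = cnt (fun j : Fin m => s i₀ j ≠ c j) :=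
      cnt_congr fun j => by
        constructor
        · exact fun h => h.2
        · exact fun h => ⟨fun a b => rfl, h⟩
    have h2 : hammingDist (s i₀) c = cnt (fun j : Fin m => s i₀ j ≠ c j) :=
      cnt_eq fun j => Iff.rfl
    have h3 : cnt (fun j : Fin m => s i₀ j ≠ c j) ≤ D := by
      rw [← h2]; exact hopt i₀
    have h4 : 2 * r - 1 ≤ 2 ^ r - 1 := by
      have := two_mul_le_two_pow r
      omega
    have h5 : r - 1 + 1 = r := by omega
    rw [h5, h1]
    exact Nat.mul_le_mul h4 h3
  obtain ⟨idx', hgood⟩ := auxrec s c D hr1 (r - 1) (fun _ => i₀) (fun a _ => rfl)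
    (by omega) hinit
  refine ⟨idx', fun l => ?_⟩
  have hgl := hgood l
  -- split the two sides
  have hX : cnt (fun j => Pp s idx' j ∧ s l j ≠ s (idx' ⟨0, hr1⟩) j)
      = cnt (fun j => Pp s idx' j ∧ s l j = c j ∧ s l j ≠ s (idx' ⟨0, hr1⟩) j)
        + cnt (fun j => Pp s idx' j ∧ s l j ≠ s (idx' ⟨0, hr1⟩) j ∧ ¬ s l j = c j) := by
    rw [cnt_split (fun j => Pp s idx' j ∧ s l j ≠ s (idx' ⟨0, hr1⟩) j) (fun j => s l j = c j)]
    congr 1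
    · exact cnt_congr fun j => by tauto
    · exact cnt_congr fun j => by tauto
  have hY : cnt (fun j => Pp s idx' j ∧ s l j ≠ c j)
      = cnt (fun j => Pp s idx' j ∧ s l j = s (idx' ⟨0, hr1⟩) j ∧ s (idx' ⟨0, hr1⟩) j ≠ c j)
        + cnt (fun j => Pp s idx' j ∧ s l j ≠ s (idx' ⟨0, hr1⟩) j ∧ ¬ s l j = c j) := by
    rw [cnt_split (fun j => Pp s idx' j ∧ s l j ≠ c j)
      (fun j => s l j = s (idx' ⟨0, hr1⟩) j)]
    congr 1
    · exact cnt_congr fun j =>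
        ⟨fun ⟨⟨hP, hne⟩, he⟩ => ⟨hP, he, fun hc => hne (he.trans hc)⟩,
         fun ⟨hP, he, hne⟩ => ⟨⟨hP, fun hc => hne (he.symm.trans hc)⟩, he⟩⟩
    · exact cnt_congr fun j => by tauto
  have hKX : (2 * r - 1) * cnt (fun j => Pp s idx' j ∧ s l j ≠ s (idx' ⟨0, hr1⟩) j)
      ≤ D + (2 * r - 1) * cnt (fun j => Pp s idx' j ∧ s l j ≠ c j) := by
    rw [hX, hY, Nat.mul_add, Nat.mul_add, ← Nat.add_assoc]
    exact Nat.add_le_add_right hgl _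
  -- pass to the reals
  have hRpos : (0 : ℝ) < 2 * (r : ℝ) - 1 := by
    have : (2 : ℝ) ≤ (r : ℝ) := by exact_mod_cast hr
    linarith
  have hKle : 1 ≤ 2 * r := by omega
  have hcast : (((2 * r - 1 : ℕ)) : ℝ) = 2 * (r : ℝ) - 1 := by
    rw [Nat.cast_sub hKle]
    push_cast
    ring
  have hgoal2 : ((cnt (fun j => Pp s idx' j ∧ s l j ≠ s (idx' ⟨0, hr1⟩) j) : ℝ))
      - (cnt (fun j => Pp s idx' j ∧ s l j ≠ c j) : ℝ) ≤ (D : ℝ) / (2 * (r : ℝ) - 1) := by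
    rw [le_div_iff₀ hRpos]
    have hR0 : (((2 * r - 1) * cnt (fun j => Pp s idx' j ∧ s l j ≠ s (idx' ⟨0, hr1⟩) j) : ℕ) : ℝ)
        ≤ ((D + (2 * r - 1) * cnt (fun j => Pp s idx' j ∧ s l j ≠ c j) : ℕ) : ℝ) :=
      Nat.cast_le.mpr hKX
    rw [Nat.cast_mul, Nat.cast_add, Nat.cast_mul, hcast] at hR0
    nlinarith [hR0]
  convert hgoal2 using 4
  · exact cnt_eq fun j => Iff.rfl
  · exact cnt_eq fun j => Iff.rfl
end
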